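/- arXiv:1610.04678 — 2 statements merged into one kernel-verified Lean document; each statement's English description precedes it below -/
import Mathlib

section
/- Let T > 0 and Ω = (0,1) × (0,T). With f_k(t) = k^{-1} e^{i ω_k² t}, so that u_k(t) = -i t e^{i ω_k² t}/k, the classical x-derivative ∂_x U_M(x,t) = Σ_{k=1}^{M} u_k(t) e_k'(x) satisfies ∫_Ω |∂_x U_M(x,t)|² dx dt = (π²/3) T³ M for every M ≥ 1. In particular ‖∂_x U_M‖_{L²(Ω)} diverges as M → ∞. -/
set_option maxHeartbeats 1000000

open MeasureTheory Complex Set Filter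
open scoped ENNReal

noncomputable section

lemma intcos2 (m : ℤ) : ∫ x in (0:ℝ)..1, Real.cos ((m:ℝ) * Real.pi * x) * (1/2:ℝ)
    = if m = 0 then 1/2 else 0 := by
  rw [intervalIntegral.integral_mul_const]
  by_cases hm : m = 0
  · simp [hm]
  · have hc : (m:ℝ) * Real.pi ≠ 0 := mul_ne_zero (Int.cast_ne_zero.2 hm) Real.pi_ne_zero
    rw [intervalIntegral.integral_comp_mul_left Real.cos hc]
    simp [integral_cos, Real.sin_int_mul_pi, hm]

lemma cosorth (j k : ℕ) (hj : 1 ≤ j) (hk : 1 ≤ k) :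
    ∫ x in (0:ℝ)..1, Real.cos ((j:ℝ)*Real.pi*x) * Real.cos ((k:ℝ)*Real.pi*x)
      = if j = k then 1/2 else 0 := by
  have hpt : ∀ x : ℝ, Real.cos ((j:ℝ)*Real.pi*x) * Real.cos ((k:ℝ)*Real.pi*x)
      = Real.cos ((Int.cast ((j:ℤ)-(k:ℤ)) : ℝ)*Real.pi*x) * (1/2) + Real.cos ((Int.cast ((j:ℤ)+(k:ℤ)) : ℝ)*Real.pi*x) * (1/2) := by
    intro x
    push_cast
    rw [show ((j:ℝ)-k)*Real.pi*x = (j:ℝ)*Real.pi*x - (k:ℝ)*Real.pi*x by ring,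
        show ((j:ℝ)+k)*Real.pi*x = (j:ℝ)*Real.pi*x + (k:ℝ)*Real.pi*x by ring,
        Real.cos_sub, Real.cos_add]
    ring
  have hcont : ∀ r : ℝ, IntervalIntegrable (fun x => Real.cos (r*Real.pi*x) * (1/2:ℝ)) volume 0 1 :=
    fun r => ((Real.continuous_cos.comp (continuous_const.mul continuous_id)).mul continuous_const).intervalIntegrable _ _
  simp only [hpt]
  rw [intervalIntegral.integral_add (hcont _) (hcont _), intcos2, intcos2]
  by_cases hjk : j = k
  · subst hjk
    rw [if_pos (sub_self (j:ℤ)), if_neg (by omega : ¬ ((j:ℤ)+(j:ℤ) = 0)), if_pos rfl]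
    ring
  · rw [if_neg (by omega : ¬ ((j:ℤ)-(k:ℤ) = 0)), if_neg (by omega : ¬ ((j:ℤ)+(k:ℤ) = 0)), if_neg hjk]
    ring

lemma xint (M : ℕ) (a : ℕ → ℂ) :
    ∫ x in (0:ℝ)..1, ‖∑ k ∈ Finset.Icc 1 M,
        a k * ((Real.sqrt 2 * ((k:ℝ)*Real.pi) * Real.cos ((k:ℝ)*Real.pi*x) : ℝ) : ℂ)‖^2
      = ∑ k ∈ Finset.Icc 1 M, Complex.normSq (a k) * ((k:ℝ)*Real.pi)^2 := by
  set s := Finset.Icc 1 M with hs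
  set b : ℕ → ℕ → ℝ := fun j k =>
    ((a j).re*(a k).re + (a j).im*(a k).im) * (Real.sqrt 2 * ((j:ℝ)*Real.pi)) *
      (Real.sqrt 2 * ((k:ℝ)*Real.pi)) with hb
  have hpt : ∀ x : ℝ, ‖∑ k ∈ s,
        a k * ((Real.sqrt 2 * ((k:ℝ)*Real.pi) * Real.cos ((k:ℝ)*Real.pi*x) : ℝ) : ℂ)‖^2
      = ∑ j ∈ s, ∑ k ∈ s, b j k * (Real.cos ((j:ℝ)*Real.pi*x) * Real.cos ((k:ℝ)*Real.pi*x)) := by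
    intro x
    set z := ∑ k ∈ s, a k * ((Real.sqrt 2 * ((k:ℝ)*Real.pi) * Real.cos ((k:ℝ)*Real.pi*x) : ℝ) : ℂ) with hz
    have hre : z.re = ∑ k ∈ s, (a k).re * (Real.sqrt 2 * ((k:ℝ)*Real.pi) * Real.cos ((k:ℝ)*Real.pi*x)) := by
      rw [hz, Complex.re_sum]
      exact Finset.sum_congr rfl fun k _ => by simp only [Complex.mul_re, Complex.ofReal_re, Complex.ofReal_im, mul_zero, sub_zero]
    have him : z.im = ∑ k ∈ s, (a k).im * (Real.sqrt 2 * ((k:ℝ)*Real.pi) * Real.cos ((k:ℝ)*Real.pi*x)) := by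
      rw [hz, Complex.im_sum]
      exact Finset.sum_congr rfl fun k _ => by simp only [Complex.mul_im, Complex.ofReal_re, Complex.ofReal_im, mul_zero, zero_add]
    have h1 : ‖z‖^2 = z.re*z.re + z.im*z.im := by
      rw [Complex.sq_norm, Complex.normSq_apply]
    rw [h1, hre, him, Finset.sum_mul_sum, Finset.sum_mul_sum, ← Finset.sum_add_distrib]
    refine Finset.sum_congr rfl fun j _ => ?_
    rw [← Finset.sum_add_distrib]
    refine Finset.sum_congr rfl fun k _ => ?_
    rw [hb]; ring
  simp only [hpt]
  have hci : ∀ j k : ℕ, IntervalIntegrable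
      (fun x => b j k * (Real.cos ((j:ℝ)*Real.pi*x) * Real.cos ((k:ℝ)*Real.pi*x))) volume 0 1 :=
    fun j k => (continuous_const.mul
      ((Real.continuous_cos.comp (continuous_const.mul continuous_id)).mul
        (Real.continuous_cos.comp (continuous_const.mul continuous_id)))).intervalIntegrable _ _
  rw [intervalIntegral.integral_finset_sum
    (f := fun j x => ∑ k ∈ s, b j k * (Real.cos ((j:ℝ)*Real.pi*x) * Real.cos ((k:ℝ)*Real.pi*x)))
    (fun j _ => (continuous_finset_sum s (fun k _ => continuous_const.mul
      ((Real.continuous_cos.comp (continuous_const.mul continuous_id)).mul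
        (Real.continuous_cos.comp (continuous_const.mul continuous_id))))).intervalIntegrable _ _)]
  have hstep : ∀ j ∈ s, (∫ x in (0:ℝ)..1, ∑ k ∈ s,
      b j k * (Real.cos ((j:ℝ)*Real.pi*x) * Real.cos ((k:ℝ)*Real.pi*x)))
      = Complex.normSq (a j) * ((j:ℝ)*Real.pi)^2 := by
    intro j hj
    rw [intervalIntegral.integral_finset_sum (fun k _ => hci j k)]
    have : ∀ k ∈ s, (∫ x in (0:ℝ)..1,
        b j k * (Real.cos ((j:ℝ)*Real.pi*x) * Real.cos ((k:ℝ)*Real.pi*x)))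
        = if j = k then b j k * (1/2) else 0 := by
      intro k hk
      rw [intervalIntegral.integral_const_mul,
        cosorth j k (Finset.mem_Icc.1 hj).1 (Finset.mem_Icc.1 hk).1]
      by_cases h : j = k <;> simp [h]
    rw [Finset.sum_congr rfl this, Finset.sum_ite_eq s j (fun k => b j k * (1/2)), if_pos hj, hb,
      Complex.normSq_apply]
    have h2 : Real.sqrt 2 * Real.sqrt 2 = 2 := Real.mul_self_sqrt (by norm_num)
    show ((a j).re*(a j).re + (a j).im*(a j).im) * (Real.sqrt 2 * ((j:ℝ)*Real.pi)) *
      (Real.sqrt 2 * ((j:ℝ)*Real.pi)) * (1/2) = _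
    calc ((a j).re*(a j).re + (a j).im*(a j).im) * (Real.sqrt 2 * ((j:ℝ)*Real.pi)) *
        (Real.sqrt 2 * ((j:ℝ)*Real.pi)) * (1/2)
        = ((a j).re*(a j).re + (a j).im*(a j).im) * ((j:ℝ)*Real.pi)^2 * (Real.sqrt 2 * Real.sqrt 2) * (1/2) := by
          ring
      _ = ((a j).re*(a j).re + (a j).im*(a j).im) * ((j:ℝ)*Real.pi)^2 := by rw [h2]; ring
  exact Finset.sum_congr rfl hstep

lemma tsq (t θ : ℝ) (k : ℕ) (hk : 1 ≤ k) :
    Complex.normSq (-Complex.I * (t:ℂ) * Complex.exp (Complex.I * (θ:ℂ) * (t:ℂ)) / (k:ℂ))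
      = t^2 / (k:ℝ)^2 := by
  have habs : ‖(-Complex.I * (t:ℂ) * Complex.exp (Complex.I * (θ:ℂ) * (t:ℂ)) / (k:ℂ))‖
      = |t| / (k:ℝ) := by
    rw [norm_div, norm_mul, norm_mul, Complex.norm_exp]
    simp [Complex.norm_natCast]
  rw [← Complex.sq_norm, habs, div_pow, _root_.sq_abs]



/-- With `ω_k = kπ`, `e_k(x) = √2 sin(kπx)` and `u_k(t) = -i t e^{i ω_k² t}/k`,
the classical `x`-derivative `∂_x U_M(x,t) = Σ_{k=1}^M u_k(t) e_k'(x)` satisfies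
`∫_Ω |∂_x U_M|² = (π²/3) T³ M` on `Ω = (0,1) × (0,T)` for every `M ≥ 1`;
in particular `‖∂_x U_M‖_{L²(Ω)}` diverges as `M → ∞`. -/

theorem DxUM_sq_integral (T : ℝ) (hT : 0 < T)
    (DU : ℕ → ℝ × ℝ → ℂ)
    (hDU : ∀ M, ∀ p : ℝ × ℝ, DU M p = ∑ k ∈ Finset.Icc 1 M,
      (-Complex.I * (p.2 : ℂ) *
          Complex.exp (Complex.I * ((((k : ℝ) * Real.pi) ^ 2 : ℝ) : ℂ) * (p.2 : ℂ)) / (k : ℂ)) *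
        ((Real.sqrt 2 * ((k : ℝ) * Real.pi) * Real.cos ((k : ℝ) * Real.pi * p.1) : ℝ) : ℂ)) :
    (∀ M : ℕ, 1 ≤ M →
      ∫ p in Set.Ioo (0:ℝ) 1 ×ˢ Set.Ioo (0:ℝ) T, ‖DU M p‖ ^ 2 =
        Real.pi ^ 2 / 3 * T ^ 3 * (M : ℝ)) ∧
    Tendsto (fun M : ℕ =>
        Real.sqrt (∫ p in Set.Ioo (0:ℝ) 1 ×ˢ Set.Ioo (0:ℝ) T, ‖DU M p‖ ^ 2))
      atTop atTop := by
  have hsqrt : Tendsto Real.sqrt atTop atTop := by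
    apply tendsto_atTop_atTop.2
    intro b
    refine ⟨b^2, fun x hx => ?_⟩
    calc b ≤ |b| := le_abs_self b
      _ = Real.sqrt (b^2) := (Real.sqrt_sq_eq_abs b).symm
      _ ≤ Real.sqrt x := Real.sqrt_le_sqrt hx
  have key : ∀ M : ℕ,
      ∫ p in Set.Ioo (0:ℝ) 1 ×ˢ Set.Ioo (0:ℝ) T, ‖DU M p‖ ^ 2 =
        Real.pi ^ 2 / 3 * T ^ 3 * (M : ℝ) := by
    intro M
    simp only [hDU]
    set G : ℝ × ℝ → ℝ := fun p => ‖(∑ k ∈ Finset.Icc 1 M,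
        (-Complex.I * ((p.2:ℝ) : ℂ) *
            Complex.exp (Complex.I * ((((k : ℝ) * Real.pi) ^ 2 : ℝ) : ℂ) * ((p.2:ℝ) : ℂ)) / (k : ℂ)) *
          ((Real.sqrt 2 * ((k : ℝ) * Real.pi) * Real.cos ((k : ℝ) * Real.pi * p.1) : ℝ) : ℂ) : ℂ)‖ ^ 2
      with hG
    have hGc : Continuous G := by
      apply (Continuous.norm ?_).pow 2
      apply continuous_finset_sum
      intro k _
      apply Continuous.mul
      · apply Continuous.div_const
        exact (continuous_const.mul (Complex.continuous_ofReal.comp continuous_snd)).mul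
          (Complex.continuous_exp.comp (continuous_const.mul
            (Complex.continuous_ofReal.comp continuous_snd)))
      · exact Complex.continuous_ofReal.comp
          ((continuous_const.mul ((Real.continuous_cos.comp (continuous_const.mul continuous_fst)))))
    have hInt : IntegrableOn G (Set.Ioo (0:ℝ) 1 ×ˢ Set.Ioo (0:ℝ) T) (volume : Measure (ℝ × ℝ)) := by
      apply (hGc.continuousOn.integrableOn_compact ((isCompact_Icc (a := (0:ℝ)) (b := 1)).prod
        (isCompact_Icc (a := (0:ℝ)) (b := T)))).mono_set
      exact Set.prod_mono Set.Ioo_subset_Icc_self Set.Ioo_subset_Icc_self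
    have hfub : ∫ p in Set.Ioo (0:ℝ) 1 ×ˢ Set.Ioo (0:ℝ) T, G p
        = ∫ t in Set.Ioo (0:ℝ) T, ∫ x in Set.Ioo (0:ℝ) 1, G (x, t) := by
      rw [Measure.volume_eq_prod] at hInt ⊢
      rw [← Measure.prod_restrict]
      have hInt' : Integrable G ((volume.restrict (Set.Ioo (0:ℝ) 1)).prod
          (volume.restrict (Set.Ioo (0:ℝ) T))) := by
        rw [Measure.prod_restrict]; exact hInt
      exact MeasureTheory.integral_prod_symm G hInt'
    rw [hfub]
    have hinner : ∀ t : ℝ, ∫ x in Set.Ioo (0:ℝ) 1, G (x, t)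
        = (M : ℝ) * (t^2 * Real.pi^2) := by
      intro t
      have h1 : ∫ x in Set.Ioo (0:ℝ) 1, G (x, t) = ∫ x in (0:ℝ)..1, G (x, t) := by
        rw [intervalIntegral.integral_of_le (by norm_num : (0:ℝ) ≤ 1),
          MeasureTheory.integral_Ioc_eq_integral_Ioo]
      rw [h1]
      have h2 := xint M (fun k => -Complex.I * (t:ℂ) *
        Complex.exp (Complex.I * ((((k : ℝ) * Real.pi) ^ 2 : ℝ) : ℂ) * (t:ℂ)) / (k : ℂ))
      rw [hG]
      simp only []
      rw [h2]
      have h5 : ∀ k ∈ Finset.Icc 1 M,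
          Complex.normSq (-Complex.I * (t:ℂ) *
            Complex.exp (Complex.I * ((((k : ℝ) * Real.pi) ^ 2 : ℝ) : ℂ) * (t:ℂ)) / (k : ℂ))
            * ((k:ℝ)*Real.pi)^2 = t^2*Real.pi^2 := by
        intro k hk
        rw [tsq t (((k : ℝ) * Real.pi) ^ 2) k (Finset.mem_Icc.1 hk).1]
        have hk1 : (1:ℕ) ≤ k := (Finset.mem_Icc.1 hk).1
        have hk0 : (k:ℝ) ≠ 0 := Nat.cast_ne_zero.2 (by omega)
        field_simp
      rw [Finset.sum_congr rfl h5, Finset.sum_const, Nat.card_Icc, Nat.add_sub_cancel,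
        nsmul_eq_mul]
    simp only [hinner]
    have h3 : ∫ t in Set.Ioo (0:ℝ) T, (M : ℝ) * (t^2 * Real.pi^2)
        = ∫ t in (0:ℝ)..T, (M : ℝ) * (t^2 * Real.pi^2) := by
      rw [intervalIntegral.integral_of_le hT.le, MeasureTheory.integral_Ioc_eq_integral_Ioo]
    rw [h3, intervalIntegral.integral_const_mul]
    have h4 : ∫ t in (0:ℝ)..T, t^2 * Real.pi^2 = (T^3/3) * Real.pi^2 := by
      rw [intervalIntegral.integral_mul_const, integral_pow]
      norm_num
    rw [h4]
    ring
  refine ⟨fun M _ => key M, ?_⟩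
  have heq : (fun M : ℕ => Real.sqrt (∫ p in Set.Ioo (0:ℝ) 1 ×ˢ Set.Ioo (0:ℝ) T, ‖DU M p‖ ^ 2))
      = fun M : ℕ => Real.sqrt (Real.pi ^ 2 / 3 * T ^ 3 * (M : ℝ)) :=
    funext fun M => by rw [key M]
  rw [heq]
  have hc : (0:ℝ) < Real.pi ^ 2 / 3 * T ^ 3 := by positivity
  have h1 : Tendsto (fun M : ℕ => Real.pi ^ 2 / 3 * T ^ 3 * (M : ℝ)) atTop atTop :=
    Tendsto.const_mul_atTop hc tendsto_natCast_atTop_atTop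
  exact hsqrt.comp h1
end
end

section
/- (Lemma 4.1, unisolvence.) Let p ≥ 3 be an integer and let w(x,t) be a polynomial with complex coefficients of degree at most p in x and at most p in t. Set x_i = i/(p-2) for i = 0,…,p-2 and t_j = j/p for j = 0,…,p. If w(x_i, t_j) = 0 for all such i,j, and ∂_x w(0, t_j) = 0 and ∂_x w(1, t_j) = 0 for all j = 0,…,p, then w is the zero polynomial. Since the number of these conditions, (p-1)(p+1) + 2(p+1) = (p+1)², equals the dimension of the space of such polynomials, the degrees of freedom are unisolvent. -/
open Polynomial MvPolynomial

private lemma natDegree_aeval_le_degreeOf (k : Fin 2) (f : Fin 2 → Polynomial ℂ)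
    (hf : ∀ i, (f i).natDegree ≤ if i = k then 1 else 0) (w : MvPolynomial (Fin 2) ℂ) :
    (MvPolynomial.aeval f w).natDegree ≤ w.degreeOf k := by
  classical
  rw [MvPolynomial.aeval_def, MvPolynomial.eval₂]
  apply (Polynomial.natDegree_sum_le _ _).trans
  apply Finset.sup_le
  intro d hd
  simp_rw [Function.comp_apply, ← Polynomial.C_eq_algebraMap]
  refine (Polynomial.natDegree_C_mul_le _ _).trans ?_
  refine (Polynomial.natDegree_prod_le _ _).trans ?_
  have h1 : ∀ i ∈ d.support, ((f i) ^ (d i)).natDegree ≤ d i * (if i = k then 1 else 0) :=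
    fun i _ => Polynomial.natDegree_pow_le.trans (Nat.mul_le_mul le_rfl (hf i))
  refine (Finset.sum_le_sum h1).trans ?_
  have h2 : ∑ i ∈ d.support, d i * (if i = k then 1 else 0) ≤ d k := by
    simp only [mul_ite, mul_one, mul_zero]
    rw [Finset.sum_ite_eq' d.support k (fun i => d i)]
    split <;> omega
  refine h2.trans ?_
  rw [MvPolynomial.degreeOf_eq_sup]
  exact Finset.le_sup (f := fun m => m k) hd

private lemma evalX (a b : ℂ) (w : MvPolynomial (Fin 2) ℂ) :
    (MvPolynomial.aeval ![Polynomial.X, Polynomial.C b] w).eval a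
      = MvPolynomial.eval ![a, b] w := by
  induction w using MvPolynomial.induction_on with
  | C c => simp
  | add f g hf hg => simp [hf, hg]
  | mul_X f i hf => fin_cases i <;> simp [hf]

private lemma evalT (a b : ℂ) (w : MvPolynomial (Fin 2) ℂ) :
    (MvPolynomial.aeval ![Polynomial.C a, Polynomial.X] w).eval b
      = MvPolynomial.eval ![a, b] w := by
  induction w using MvPolynomial.induction_on with
  | C c => simp
  | add f g hf hg => simp [hf, hg]
  | mul_X f i hf => fin_cases i <;> simp [hf]

private lemma deriv_comm (b : ℂ) (w : MvPolynomial (Fin 2) ℂ) :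
    Polynomial.derivative (MvPolynomial.aeval ![Polynomial.X, Polynomial.C b] w)
      = MvPolynomial.aeval ![Polynomial.X, Polynomial.C b] (MvPolynomial.pderiv 0 w) := by
  induction w using MvPolynomial.induction_on with
  | C c => simp
  | add f g hf hg => simp [hf, hg]
  | mul_X f i hf =>
      fin_cases i <;>
        simp [MvPolynomial.pderiv_X, Polynomial.derivative_mul, hf] <;> ring

/-- key univariate lemma -/
private lemma key_univ (p : ℕ) (hp : 3 ≤ p) (q : Polynomial ℂ) (hdeg : q.natDegree ≤ p)
    (hroots : ∀ i ≤ p - 2, q.eval ((i : ℂ) / ((p : ℂ) - 2)) = 0)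
    (h0 : q.derivative.eval 0 = 0) (h1 : q.derivative.eval 1 = 0) : q = 0 := by
  classical
  by_contra hq
  have hc : (p : ℂ) - 2 ≠ 0 := by
    intro h
    have : (p : ℂ) = 2 := by linear_combination h
    have : (p : ℕ) = 2 := by exact_mod_cast this
    omega
  set c : ℂ := (p : ℂ) - 2 with hcdef
  have hinj : Function.Injective (fun i : ℕ => (i : ℂ) / c) := by
    intro i j hij
    have h' : (i : ℂ) * c = (j : ℂ) * c := by
      rwa [div_eq_div_iff hc hc] at hij
    exact_mod_cast mul_right_cancel₀ hc h'
  set S : Finset ℂ := (Finset.range (p - 1)).image (fun i : ℕ => (i : ℂ) / c) with hS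
  have hcardS : S.card = p - 1 := by
    rw [hS, Finset.card_image_of_injective _ hinj, Finset.card_range]
  have h0S : (0 : ℂ) ∈ S := by
    refine Finset.mem_image.2 ⟨0, Finset.mem_range.2 (by omega), by simp⟩
  have h1S : (1 : ℂ) ∈ S := by
    refine Finset.mem_image.2 ⟨p - 2, Finset.mem_range.2 (by omega), ?_⟩
    have : ((p - 2 : ℕ) : ℂ) = c := by
      rw [hcdef, Nat.cast_sub (by omega)]; norm_num
    simp [this, div_self hc]
  have hrootS : ∀ x ∈ S, q.eval x = 0 := by
    intro x hx
    obtain ⟨i, hi, rfl⟩ := Finset.mem_image.1 hx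
    exact hroots i (by have := Finset.mem_range.1 hi; omega)
  -- multiplicities
  have hmem : ∀ x ∈ S, x ∈ q.roots := fun x hx =>
    (Polynomial.mem_roots hq).2 (hrootS x hx)
  have hcount1 : ∀ x ∈ S, 1 ≤ q.roots.count x := fun x hx =>
    Multiset.one_le_count_iff_mem.2 (hmem x hx)
  have hcount0 : 2 ≤ q.roots.count 0 := by
    rw [Polynomial.count_roots]
    exact (Polynomial.one_lt_rootMultiplicity_iff_isRoot hq).2 ⟨hrootS 0 h0S, h0⟩
  have hcount01 : 2 ≤ q.roots.count 1 := by
    rw [Polynomial.count_roots]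
    exact (Polynomial.one_lt_rootMultiplicity_iff_isRoot hq).2 ⟨hrootS 1 h1S, h1⟩
  have hsub : ({0, 1} : Finset ℂ) ⊆ S := by
    intro x hx
    rcases Finset.mem_insert.1 hx with rfl | hx
    · exact h0S
    · rw [Finset.mem_singleton.1 hx]; exact h1S
  have hsum : ∑ x ∈ S, q.roots.count x ≤ Multiset.card q.roots := by
    have hsubset : S ⊆ q.roots.toFinset := fun x hx => Multiset.mem_toFinset.2 (hmem x hx)
    calc ∑ x ∈ S, q.roots.count x
        ≤ ∑ x ∈ q.roots.toFinset, q.roots.count x :=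
          Finset.sum_le_sum_of_subset hsubset
      _ = Multiset.card q.roots := Multiset.toFinset_sum_count_eq _
  have hsplit : ∑ x ∈ S \ {0, 1}, q.roots.count x + ∑ x ∈ ({0, 1} : Finset ℂ), q.roots.count x
      = ∑ x ∈ S, q.roots.count x := Finset.sum_sdiff hsub
  have hpair : ∑ x ∈ ({0, 1} : Finset ℂ), q.roots.count x
      = q.roots.count 0 + q.roots.count 1 :=
    Finset.sum_pair (by norm_num)
  have hcard_sdiff : (S \ {0, 1}).card = p - 3 := by
    rw [Finset.card_sdiff_of_subset hsub, hcardS]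
    have : ({0, 1} : Finset ℂ).card = 2 := by
      rw [Finset.card_insert_of_notMem (by norm_num), Finset.card_singleton]
    omega
  have hlow : (S \ {0, 1}).card ≤ ∑ x ∈ S \ {0, 1}, q.roots.count x := by
    calc (S \ {0, 1}).card = ∑ _x ∈ S \ {0, 1}, 1 := by simp
      _ ≤ ∑ x ∈ S \ {0, 1}, q.roots.count x :=
        Finset.sum_le_sum fun x hx => hcount1 x (Finset.mem_sdiff.1 hx).1
  have hroots_card : Multiset.card q.roots ≤ p := (Polynomial.card_roots' q).trans hdeg
  omega

/-- Lemma 4.1 (unisolvence): let `p ≥ 3` and let `w` be a polynomial in `(x,t)`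
of degree at most `p` in each variable.  If `w` vanishes at the grid points
`(i/(p-2), j/p)` for `i = 0,…,p-2`, `j = 0,…,p`, and `∂_x w` vanishes at
`(0, j/p)` and `(1, j/p)` for `j = 0,…,p`, then `w = 0`.  The number of these
conditions, `(p-1)(p+1) + 2(p+1) = (p+1)²`, equals the dimension of the
polynomial space, so the degrees of freedom are unisolvent. -/
theorem Qp_unisolvent (p : ℕ) (hp : 3 ≤ p) (w : MvPolynomial (Fin 2) ℂ)
    (hdegx : w.degreeOf 0 ≤ p) (hdegt : w.degreeOf 1 ≤ p)
    (hval : ∀ i ≤ p - 2, ∀ j ≤ p,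
      MvPolynomial.eval ![(i : ℂ) / ((p : ℂ) - 2), (j : ℂ) / (p : ℂ)] w = 0)
    (hder : ∀ j ≤ p,
      MvPolynomial.eval ![(0 : ℂ), (j : ℂ) / (p : ℂ)] (MvPolynomial.pderiv 0 w) = 0 ∧
      MvPolynomial.eval ![(1 : ℂ), (j : ℂ) / (p : ℂ)] (MvPolynomial.pderiv 0 w) = 0) :
    w = 0 ∧ (p - 1) * (p + 1) + 2 * (p + 1) = (p + 1) ^ 2 := by
  constructor
  · -- step 1: for each j ≤ p, the x-polynomial at t_j vanishes
    have hp0 : (p : ℂ) ≠ 0 := Nat.cast_ne_zero.2 (by omega)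
    have step1 : ∀ j ≤ p, ∀ a : ℂ,
        MvPolynomial.eval ![a, (j : ℂ) / (p : ℂ)] w = 0 := by
      intro j hj a
      set b : ℂ := (j : ℂ) / (p : ℂ)
      set q : Polynomial ℂ := MvPolynomial.aeval ![Polynomial.X, Polynomial.C b] w with hqdef
      have hq0 : q = 0 := by
        apply key_univ p hp q
        · refine (natDegree_aeval_le_degreeOf 0 _ ?_ w).trans hdegx
          intro i; fin_cases i <;> simp
        · intro i hi
          rw [hqdef, evalX]
          exact hval i hi j hj
        · rw [hqdef, deriv_comm, evalX]
          exact (hder j hj).1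
        · rw [hqdef, deriv_comm, evalX]
          exact (hder j hj).2
      rw [← evalX a b w, ← hqdef, hq0]
      simp
    -- step 2: for each a, the t-polynomial vanishes
    have step2 : ∀ a b : ℂ, MvPolynomial.eval ![a, b] w = 0 := by
      intro a b
      set q : Polynomial ℂ := MvPolynomial.aeval ![Polynomial.C a, Polynomial.X] w with hqdef
      have hq0 : q = 0 := by
        apply Polynomial.eq_zero_of_natDegree_lt_card_of_eval_eq_zero' q
          ((Finset.range (p + 1)).image (fun j : ℕ => (j : ℂ) / (p : ℂ)))
        · intro x hx
          obtain ⟨j, hj, rfl⟩ := Finset.mem_image.1 hx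
          rw [hqdef, evalT]
          exact step1 j (by have := Finset.mem_range.1 hj; omega) a
        · have hinj : Function.Injective (fun j : ℕ => (j : ℂ) / (p : ℂ)) := by
            intro i j hij
            simp only at hij
            have : (i : ℂ) = j := by
              field_simp at hij
              exact_mod_cast hij
            exact_mod_cast this
          rw [Finset.card_image_of_injective _ hinj, Finset.card_range]
          have : q.natDegree ≤ p := by
            refine (natDegree_aeval_le_degreeOf 1 _ ?_ w).trans hdegt
            intro i; fin_cases i <;> simp
          omega
      rw [← evalT a b w, ← hqdef, hq0]
      simp
    apply MvPolynomial.funext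
    intro x
    have : x = ![x 0, x 1] := by
      funext i; fin_cases i <;> simp
    rw [this, step2]
    simp
  · obtain ⟨k, rfl⟩ : ∃ k, p = k + 3 := ⟨p - 3, by omega⟩
    have h1 : k + 3 - 1 = k + 2 := rfl
    rw [h1]; ring
end
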